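/- arXiv:1811.07410 — 3 statements merged into one kernel-verified Lean document; each statement's English description precedes it below -/
import Mathlib

section
/- Let A, A', B, B' be positive semidefinite operators on a finite-dimensional complex inner product space with A' ≥ A and B' ≥ B in the Loewner order. Then ‖√A' · √B'‖ ≥ ‖√A · √B‖, where √X denotes the positive semidefinite square root of X and ‖·‖ denotes the operator norm (Schatten ∞-norm, i.e. the largest singular value). -/
/-!
Writing `‖X‖` for the operator norm, the C⋆-identity gives `‖√A √B‖² = ‖√B A √B‖`, and
`A ≤ A'` implies `0 ≤ √B A √B ≤ √B A' √B`, so `‖√A √B‖` is monotone in `A`. Since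
`(√A √B)ᴴ = √B √A` has the same norm, the same argument gives monotonicity in `B`.
-/

open Matrix ComplexOrder

/-- The operator norm (Schatten ∞-norm, largest singular value) of a complex square
matrix, viewed as an operator on the Euclidean space `ℂ^d`. -/
noncomputable def opNorm {d : ℕ} (A : Matrix (Fin d) (Fin d) ℂ) : ℝ :=
  ‖Matrix.toEuclideanCLM (𝕜 := ℂ) A‖

/-- The positive semidefinite square root of a positive semidefinite matrix
(the definition of `Matrix.PosSemidef.sqrt` from the older Mathlib, since removed). -/
noncomputable def Matrix.PosSemidef.sqrt {n 𝕜 : Type*} [Fintype n] [RCLike 𝕜] [DecidableEq n]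
    {A : Matrix n n 𝕜} (hA : A.PosSemidef) : Matrix n n 𝕜 :=
  hA.1.eigenvectorUnitary.1 * diagonal ((↑) ∘ (√·) ∘ hA.1.eigenvalues) *
  (star hA.1.eigenvectorUnitary : Matrix n n 𝕜)

namespace Matrix.PosSemidef

variable {n 𝕜 : Type*} [Fintype n] [RCLike 𝕜] [DecidableEq n] {A : Matrix n n 𝕜}

lemma posSemidef_sqrt (hA : A.PosSemidef) : hA.sqrt.PosSemidef := by
  have hD : (diagonal ((↑) ∘ (√·) ∘ hA.1.eigenvalues : n → 𝕜)).PosSemidef :=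
    posSemidef_diagonal_iff.2 fun _ => RCLike.ofReal_nonneg.mpr (Real.sqrt_nonneg _)
  rw [Matrix.PosSemidef.sqrt, star_eq_conjTranspose]
  exact hD.mul_mul_conjTranspose_same _

lemma conjTranspose_sqrt (hA : A.PosSemidef) : hA.sqrtᴴ = hA.sqrt :=
  hA.posSemidef_sqrt.isHermitian

lemma sqrt_mul_self (hA : A.PosSemidef) : hA.sqrt * hA.sqrt = A := by
  set U : Matrix n n 𝕜 := hA.1.eigenvectorUnitary.1
  set D : Matrix n n 𝕜 := diagonal ((↑) ∘ (√·) ∘ hA.1.eigenvalues)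
  have hU : star U * U = 1 := Unitary.star_mul_self_of_mem hA.1.eigenvectorUnitary.2
  have hDD : D * D = diagonal (RCLike.ofReal ∘ hA.1.eigenvalues) := by
    rw [diagonal_mul_diagonal]
    congr 1
    funext i
    simp only [Function.comp_apply]
    rw [← RCLike.ofReal_mul, Real.mul_self_sqrt (hA.eigenvalues_nonneg i)]
  calc hA.sqrt * hA.sqrt = U * D * (star U * U) * D * star U := by
        simp only [Matrix.PosSemidef.sqrt, U, D, Matrix.mul_assoc]
    _ = U * (D * D) * star U := by rw [hU, Matrix.mul_one, Matrix.mul_assoc U D D]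
    _ = A := by
      rw [hDD]
      conv_rhs => rw [hA.1.spectral_theorem, Unitary.conjStarAlgAut_apply]

lemma conjTranspose_sqrt_mul_sqrt {B : Matrix n n 𝕜} (hA : A.PosSemidef) (hB : B.PosSemidef) :
    (hA.sqrt * hB.sqrt)ᴴ = hB.sqrt * hA.sqrt := by
  rw [conjTranspose_mul, hA.conjTranspose_sqrt, hB.conjTranspose_sqrt]

lemma conjTranspose_mul_self_sqrt_mul_sqrt {B : Matrix n n 𝕜} (hA : A.PosSemidef)
    (hB : B.PosSemidef) : (hA.sqrt * hB.sqrt)ᴴ * (hA.sqrt * hB.sqrt) = hB.sqrt * A * hB.sqrt := by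
  rw [conjTranspose_sqrt_mul_sqrt, Matrix.mul_assoc, ← Matrix.mul_assoc hA.sqrt,
    hA.sqrt_mul_self, Matrix.mul_assoc]

lemma sqrt_mul_mul_sqrt {B : Matrix n n 𝕜} (hA : A.PosSemidef) (hB : B.PosSemidef) :
    (hB.sqrt * A * hB.sqrt).PosSemidef := by
  simpa only [hB.conjTranspose_sqrt] using hA.conjTranspose_mul_mul_same hB.sqrt

end Matrix.PosSemidef

section opNorm

variable {d : ℕ}

lemma toEuclideanCLM_nonneg {M : Matrix (Fin d) (Fin d) ℂ} (hM : M.PosSemidef) :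
    0 ≤ Matrix.toEuclideanCLM (𝕜 := ℂ) M := by
  have h : M = star hM.sqrt * hM.sqrt := by
    rw [star_eq_conjTranspose, hM.conjTranspose_sqrt, hM.sqrt_mul_self]
  rw [h, map_mul, map_star]
  exact star_mul_self_nonneg _

lemma opNorm_conjTranspose (M : Matrix (Fin d) (Fin d) ℂ) : opNorm Mᴴ = opNorm M := by
  rw [opNorm, opNorm, ← star_eq_conjTranspose, map_star, ContinuousLinearMap.star_eq_adjoint,
    LinearIsometryEquiv.norm_map]

lemma opNorm_conjTranspose_mul_self (M : Matrix (Fin d) (Fin d) ℂ) :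
    opNorm (Mᴴ * M) = opNorm M ^ 2 := by
  rw [opNorm, opNorm, ← star_eq_conjTranspose, map_mul, map_star, sq]
  exact ContinuousLinearMap.norm_adjoint_comp_self _

lemma opNorm_le_opNorm_of_posSemidef_sub {M N : Matrix (Fin d) (Fin d) ℂ} (hM : M.PosSemidef)
    (hNM : (N - M).PosSemidef) : opNorm M ≤ opNorm N := by
  refine CStarAlgebra.norm_le_norm_of_nonneg_of_le (toEuclideanCLM_nonneg hM) ?_
  rw [← sub_nonneg, ← map_sub]
  exact toEuclideanCLM_nonneg hNM

lemma opNorm_sqrt_mul_sqrt_comm {A B : Matrix (Fin d) (Fin d) ℂ} (hA : A.PosSemidef)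
    (hB : B.PosSemidef) : opNorm (hA.sqrt * hB.sqrt) = opNorm (hB.sqrt * hA.sqrt) := by
  rw [← opNorm_conjTranspose, hA.conjTranspose_sqrt_mul_sqrt]

lemma opNorm_sqrt_mul_sqrt_le_of_left {A A' B : Matrix (Fin d) (Fin d) ℂ} (hA : A.PosSemidef)
    (hA' : A'.PosSemidef) (hB : B.PosSemidef) (hAA' : (A' - A).PosSemidef) :
    opNorm (hA.sqrt * hB.sqrt) ≤ opNorm (hA'.sqrt * hB.sqrt) := by
  have hconj : (hB.sqrt * A' * hB.sqrt - hB.sqrt * A * hB.sqrt).PosSemidef := by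
    simpa only [hB.conjTranspose_sqrt, Matrix.mul_sub, Matrix.sub_mul] using
      hAA'.conjTranspose_mul_mul_same hB.sqrt
  have hsq : opNorm (hA.sqrt * hB.sqrt) ^ 2 ≤ opNorm (hA'.sqrt * hB.sqrt) ^ 2 := by
    rw [← opNorm_conjTranspose_mul_self, ← opNorm_conjTranspose_mul_self,
      hA.conjTranspose_mul_self_sqrt_mul_sqrt, hA'.conjTranspose_mul_self_sqrt_mul_sqrt]
    exact opNorm_le_opNorm_of_posSemidef_sub (hA.sqrt_mul_mul_sqrt hB) hconj
  exact (pow_le_pow_iff_left₀ (norm_nonneg _) (norm_nonneg _) two_ne_zero).1 hsq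

end opNorm

/-- If `A ≤ A'` and `B ≤ B'` in the Loewner order (all four matrices positive
semidefinite), then `‖√A' √B'‖ ≥ ‖√A √B‖`. -/
theorem stmt1 {d : ℕ} {A A' B B' : Matrix (Fin d) (Fin d) ℂ}
    (hA : A.PosSemidef) (hA' : A'.PosSemidef) (hB : B.PosSemidef) (hB' : B'.PosSemidef)
    (hAA' : (A' - A).PosSemidef) (hBB' : (B' - B).PosSemidef) :
    opNorm (hA.sqrt * hB.sqrt) ≤ opNorm (hA'.sqrt * hB'.sqrt) :=
  calc opNorm (hA.sqrt * hB.sqrt)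
      ≤ opNorm (hA'.sqrt * hB.sqrt) := opNorm_sqrt_mul_sqrt_le_of_left hA hA' hB hAA'
    _ = opNorm (hB.sqrt * hA'.sqrt) := opNorm_sqrt_mul_sqrt_comm hA' hB
    _ ≤ opNorm (hB'.sqrt * hA'.sqrt) := opNorm_sqrt_mul_sqrt_le_of_left hB hB' hA' hBB'
    _ = opNorm (hA'.sqrt * hB'.sqrt) := opNorm_sqrt_mul_sqrt_comm hB' hA'
end

section
/- The four two-qubit states ξ_{00}, ξ_{01}, ξ_{10}, ξ_{11} defined in the context form an orthonormal basis of ℂ² ⊗ ℂ² (equivalently, of ℂ⁴). -/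
open scoped BigOperators

noncomputable section

/-- The computational-basis qubit state `|a⟩`. -/
def bket (a : Bool) : EuclideanSpace ℂ (Fin 2) := WithLp.toLp 2 fun i =>
  if i = (if a then 1 else 0) then 1 else 0

/-- The Hadamard-basis qubit state `|â⟩ = (|0⟩ + (−1)^a |1⟩)/√2`. -/
def hket (a : Bool) : EuclideanSpace ℂ (Fin 2) := WithLp.toLp 2 fun i =>
  (Real.sqrt 2 : ℂ)⁻¹ * (if a ∧ i = 1 then -1 else 1)

/-- The BB84 two-qubit state `|ψ^s_{r₀ r₁}⟩`: `|r₀⟩` (computational basis) in tensor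
factor `s` and `|r̂₁⟩` (Hadamard basis) in tensor factor `1 − s`. -/
def psiBB84 (s r0 r1 : Bool) : EuclideanSpace ℂ (Fin 2 × Fin 2) := WithLp.toLp 2 fun p =>
  if s then hket r1 p.1 * bket r0 p.2 else bket r0 p.1 * hket r1 p.2

/-- The four states `ξ_{l₀ l₁}` of Bob's cheating measurement basis. -/
def xiv : Bool × Bool → EuclideanSpace ℂ (Fin 2 × Fin 2)
  | (false, false) =>
      ((Real.sqrt 3 : ℂ) / 2) • psiBB84 false false false
        - ((2 * Real.sqrt 3 : ℂ))⁻¹ •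
            (-psiBB84 false false true + psiBB84 false true false + psiBB84 false true true)
  | (false, true) =>
      ((Real.sqrt 3 : ℂ) / 2) • psiBB84 false false true
        - ((2 * Real.sqrt 3 : ℂ))⁻¹ •
            (psiBB84 false false false - psiBB84 false true false + psiBB84 false true true)
  | (true, false) =>
      ((Real.sqrt 3 : ℂ) / 2) • psiBB84 false true false
        - ((2 * Real.sqrt 3 : ℂ))⁻¹ •
            (-psiBB84 false false false + psiBB84 false false true + psiBB84 false true true)
  | (true, true) =>
      -(((Real.sqrt 3 : ℂ) / 2) • psiBB84 false true true)
        - ((2 * Real.sqrt 3 : ℂ))⁻¹ •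
            (psiBB84 false false false + psiBB84 false false true + psiBB84 false true false)

/-!
Multiplying by `√6` clears every radical: `√6 ξ_l` has integer coordinates in the product
basis `|i⟩ ⊗ |j⟩`, and these four integer vectors are pairwise orthogonal of squared length 6.
Four orthonormal vectors in the 4-dimensional space `ℂ² ⊗ ℂ²` span it.
-/

theorem inner_toLp_intCast {𝕜 ι : Type*} [RCLike 𝕜] [Fintype ι] (u v : ι → ℤ) :
    inner 𝕜 (WithLp.toLp 2 fun i => (u i : 𝕜) : EuclideanSpace 𝕜 ι)
        (WithLp.toLp 2 fun i => (v i : 𝕜)) = ((∑ i, u i * v i : ℤ) : 𝕜) := by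
  simp [PiLp.inner_apply, mul_comm]

theorem orthonormal_inv_sqrt_smul_of_inner_eq {𝕜 ι E : Type*} [RCLike 𝕜]
    [NormedAddCommGroup E] [InnerProductSpace 𝕜 E] [DecidableEq ι] {w : ι → E} {r : ℝ}
    (hr : 0 < r) (hw : ∀ i j, inner 𝕜 (w i) (w j) = if i = j then (r : 𝕜) else 0) :
    Orthonormal 𝕜 fun i => ((Real.sqrt r : 𝕜))⁻¹ • w i := by
  have hsqrt : (Real.sqrt r : 𝕜) * Real.sqrt r = r := by
    rw [← RCLike.ofReal_mul, Real.mul_self_sqrt hr.le]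
  have hsqrt_ne : (Real.sqrt r : 𝕜) ≠ 0 := by
    simpa using (Real.sqrt_pos.2 hr).ne'
  rw [orthonormal_iff_ite]
  intro i j
  rw [inner_smul_left, inner_smul_right, hw]
  split_ifs
  · simp [← hsqrt, hsqrt_ne]
  · simp

/-- `xivInt l (i, j) = √6 ⟨i j | ξ_l⟩`. -/
def xivInt : Bool × Bool → Fin 2 × Fin 2 → ℤ
  | (false, false) => fun p => !![2, 1; -1, 0] p.1 p.2
  | (false, true)  => fun p => !![1, -2; 0, 1] p.1 p.2
  | (true, false)  => fun p => !![0, 1; 1, 2] p.1 p.2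
  | (true, true)   => fun p => !![-1, 0; -2, 1] p.1 p.2

theorem xivInt_dot (k l : Bool × Bool) :
    ∑ p, xivInt k p * xivInt l p = if k = l then 6 else 0 := by
  revert k l
  decide

theorem xiv_eq_inv_sqrt_six_smul (l : Bool × Bool) :
    xiv l = (Real.sqrt 6 : ℂ)⁻¹ • WithLp.toLp 2 fun p => (xivInt l p : ℂ) := by
  have h6 : (Real.sqrt 6 : ℂ) = Real.sqrt 2 * Real.sqrt 3 := by
    rw [← Complex.ofReal_mul, ← Real.sqrt_mul zero_le_two]
    norm_num
  have h3 : (Real.sqrt 3 : ℂ) ^ 2 = 3 := by norm_cast; simp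
  rw [h6]
  rcases l with ⟨_ | _, _ | _⟩ <;> ext ⟨i, j⟩ <;> fin_cases i <;> fin_cases j <;>
    simp only [xiv, xivInt, psiBB84, bket, hket, PiLp.sub_apply, PiLp.add_apply,
      PiLp.neg_apply, PiLp.smul_apply, smul_eq_mul, Matrix.of_apply] <;>
    norm_num <;> field_simp <;> norm_num [h3]

theorem orthonormal_xiv : Orthonormal ℂ xiv := by
  rw [funext xiv_eq_inv_sqrt_six_smul]
  refine orthonormal_inv_sqrt_smul_of_inner_eq (by norm_num) fun k l => ?_
  rw [inner_toLp_intCast, xivInt_dot]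
  split_ifs <;> simp

/-- The four states `ξ_{00}, ξ_{01}, ξ_{10}, ξ_{11}` form an orthonormal basis of
`ℂ² ⊗ ℂ²`. -/
theorem stmt13 :
    Orthonormal ℂ xiv ∧ Submodule.span ℂ (Set.range xiv) = ⊤ :=
  ⟨orthonormal_xiv, orthonormal_xiv.linearIndependent.span_eq_top_of_card_eq_finrank
    (by simp [finrank_euclideanSpace])⟩

end
end

section
/- (Success probability of Bob's explicit cheating strategy, single round.) With the BB84 two-qubit states ψ^s_{r₀ r₁} and the measurement basis states ξ defined in the context, one has (1/8)·( |⟨ψ^0_{00}|ξ_{00}⟩|² + |⟨ψ^0_{01}|ξ_{01}⟩|² + |⟨ψ^0_{10}|ξ_{10}⟩|² + |⟨ψ^0_{11}|ξ_{11}⟩|² + |⟨ψ^1_{00}|ξ_{11}⟩|² + |⟨ψ^1_{01}|ξ_{00}⟩|² + |⟨ψ^1_{10}|ξ_{10}⟩|² + |⟨ψ^1_{11}|ξ_{01}⟩|² ) = 3/4. -/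
/-!
The four states `ψ^0_{r₀ r₁}` are products of the computational and the Hadamard basis, hence
an orthonormal basis, and each `ξ_l` is written in it; so `⟨ψ^0_r|ξ_r⟩ = ±√3/2` can be read
off. The overlaps `⟨ψ^1_{ab}|ψ^0_{cd}⟩ = ⟨b̂|c⟩⟨a|d̂⟩` are all `±1/2`, and for the pairing in the
theorem their signs make the three small components of `ξ_l` add up coherently with the
large one, giving `⟨ψ^1_r|ξ_l⟩ = ±(√3/4 + 3/(4√3)) = ±√3/2`. Thus all eight terms equal `3/4`.
-/

open scoped BigOperators

noncomputable section

open scoped InnerProductSpace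

/-- `u ⊗ v` in the model `ℂ^ι ⊗ ℂ^κ = ℂ^(ι × κ)` used by `psiBB84`. -/
def tensorVec {𝕜 ι κ : Type*} [RCLike 𝕜] (u : EuclideanSpace 𝕜 ι) (v : EuclideanSpace 𝕜 κ) :
    EuclideanSpace 𝕜 (ι × κ) :=
  WithLp.toLp 2 fun p => u p.1 * v p.2

theorem inner_tensorVec {𝕜 ι κ : Type*} [RCLike 𝕜] [Fintype ι] [Fintype κ]
    (u u' : EuclideanSpace 𝕜 ι) (v v' : EuclideanSpace 𝕜 κ) :
    ⟪tensorVec u v, tensorVec u' v'⟫_𝕜 = ⟪u, u'⟫_𝕜 * ⟪v, v'⟫_𝕜 := by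
  simp only [tensorVec, PiLp.inner_apply, Fintype.sum_prod_type, Finset.sum_mul_sum,
    RCLike.inner_apply, map_mul]
  refine Finset.sum_congr rfl fun i _ => Finset.sum_congr rfl fun j _ => ?_
  ring

theorem psiBB84_eq_tensorVec (s r0 r1 : Bool) :
    psiBB84 s r0 r1 =
      if s then tensorVec (hket r1) (bket r0) else tensorVec (bket r0) (hket r1) := by
  cases s <;> rfl

theorem inner_bket_bket (a b : Bool) : ⟪bket a, bket b⟫_ℂ = if a = b then 1 else 0 := by
  rw [PiLp.inner_apply]
  cases a <;> cases b <;> simp [bket, Fin.sum_univ_two]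

theorem inner_hket_hket (a b : Bool) : ⟪hket a, hket b⟫_ℂ = if a = b then 1 else 0 := by
  rw [PiLp.inner_apply]
  cases a <;> cases b <;> norm_num [hket, Fin.sum_univ_two, ← Complex.ofReal_pow]

theorem inner_hket_bket (a b : Bool) :
    ⟪hket a, bket b⟫_ℂ = (Real.sqrt 2 : ℂ)⁻¹ * (if a && b then -1 else 1) := by
  rw [PiLp.inner_apply]
  cases a <;> cases b <;> simp [hket, bket]

theorem inner_bket_hket (a b : Bool) :
    ⟪bket a, hket b⟫_ℂ = (Real.sqrt 2 : ℂ)⁻¹ * (if a && b then -1 else 1) := by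
  rw [PiLp.inner_apply]
  cases a <;> cases b <;> simp [hket, bket]

theorem inner_psiBB84_false_false (a b c d : Bool) :
    ⟪psiBB84 false a b, psiBB84 false c d⟫_ℂ = if a = c ∧ b = d then 1 else 0 := by
  simp only [psiBB84_eq_tensorVec, inner_tensorVec, inner_bket_bket, inner_hket_hket,
    Bool.false_eq_true, if_false, ite_and]
  split_ifs <;> simp

theorem inner_psiBB84_true_false (a b c d : Bool) :
    ⟪psiBB84 true a b, psiBB84 false c d⟫_ℂ =
      (1 / 2) * (if b && c then -1 else 1) * (if a && d then -1 else 1) := by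
  have h2 : ((Real.sqrt 2 : ℂ)⁻¹) ^ 2 = 1 / 2 := by rw [inv_pow]; norm_cast; simp
  simp only [psiBB84_eq_tensorVec, inner_tensorVec, inner_hket_bket, inner_bket_hket,
    Bool.false_eq_true, if_false, if_true]
  linear_combination (if b && c then -1 else 1) * (if a && d then -1 else 1) * h2

/-- The outcome `l` of Bob's measurement in the basis `ξ` after which he answers `(r₀, r₁)`
correctly for the state `ψ^s_{r₀ r₁}`; it is the pairing of the eight terms in the theorem. -/
def winningOutcome : Bool → Bool → Bool → Bool × Bool
  | false, r0, r1 => (r0, r1)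
  | true, false, false => (true, true)
  | true, false, true => (false, false)
  | true, true, false => (true, false)
  | true, true, true => (false, true)

theorem inner_psiBB84_xiv_winningOutcome_sq (s r0 r1 : Bool) :
    ⟪psiBB84 s r0 r1, xiv (winningOutcome s r0 r1)⟫_ℂ ^ 2 = 3 / 4 := by
  have h3 : (Real.sqrt 3 : ℂ) ^ 2 = 3 := by norm_cast; simp
  cases s <;> cases r0 <;> cases r1 <;>
    simp only [winningOutcome, xiv, inner_sub_right, inner_add_right, inner_neg_right,
      inner_smul_right, inner_psiBB84_false_false, inner_psiBB84_true_false] <;>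
    norm_num <;> field_simp <;> grind

theorem norm_inner_psiBB84_xiv_winningOutcome_sq (s r0 r1 : Bool) :
    ‖⟪psiBB84 s r0 r1, xiv (winningOutcome s r0 r1)⟫_ℂ‖ ^ 2 = 3 / 4 := by
  rw [← norm_pow, inner_psiBB84_xiv_winningOutcome_sq]
  norm_num

/-- The single-round success probability of Bob's explicit cheating strategy is `3/4`. -/
theorem stmt14 :
    (1 / 8 : ℝ) *
        (‖inner (𝕜 := ℂ) (psiBB84 false false false) (xiv (false, false))‖ ^ 2
          + ‖inner (𝕜 := ℂ) (psiBB84 false false true) (xiv (false, true))‖ ^ 2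
          + ‖inner (𝕜 := ℂ) (psiBB84 false true false) (xiv (true, false))‖ ^ 2
          + ‖inner (𝕜 := ℂ) (psiBB84 false true true) (xiv (true, true))‖ ^ 2
          + ‖inner (𝕜 := ℂ) (psiBB84 true false false) (xiv (true, true))‖ ^ 2
          + ‖inner (𝕜 := ℂ) (psiBB84 true false true) (xiv (false, false))‖ ^ 2
          + ‖inner (𝕜 := ℂ) (psiBB84 true true false) (xiv (true, false))‖ ^ 2
          + ‖inner (𝕜 := ℂ) (psiBB84 true true true) (xiv (false, true))‖ ^ 2)
      = 3 / 4 := by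
  calc _ = (1 / 8 : ℝ) * ∑ s : Bool, ∑ r0 : Bool, ∑ r1 : Bool,
          ‖⟪psiBB84 s r0 r1, xiv (winningOutcome s r0 r1)⟫_ℂ‖ ^ 2 := by
        simp only [Fintype.sum_bool, winningOutcome]
        ring
    _ = 3 / 4 := by
        simp only [norm_inner_psiBB84_xiv_winningOutcome_sq, Finset.sum_const, Finset.card_univ,
          Fintype.card_bool]
        norm_num

end
end
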